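/- arXiv:2205.12601 — 2 statements merged into one kernel-verified Lean document; each statement's English description precedes it below -/
import Mathlib

section
/- Let W ≥ 2, L ∈ ℕ, K ≥ 0, B > 0, and let x_1,…,x_n ∈ [−B,B]^d. Let S := {(φ(x_1),…,φ(x_n)) : φ ∈ SNN_{d,1}(W,L,K)} ⊆ ℝ^n. Then R_n(S) ≥ (K/(2√2·n)) · max_{1≤j≤d+1} √(Σ_{i=1}^n x_{i,j}²) ≥ K/(2√(2n)), where x_{i,j} denotes the j-th coordinate of the augmented vector x̃_i = (x_iᵀ,1)ᵀ ∈ ℝ^{d+1}. -/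
open Finset
open scoped BigOperators

/-- Rademacher complexity of a set `S ⊆ ℝ^n`:
`R_n(S) = E_ξ [ sup_{s ∈ S} (1/n) ∑ᵢ ξᵢ sᵢ ]` for i.i.d. uniform signs `ξᵢ ∈ {±1}`. -/
noncomputable def radComplexity {n : ℕ} (S : Set (Fin n → ℝ)) : ℝ :=
  (∑ ξ : Fin n → Bool,
      sSup ((fun s => (n : ℝ)⁻¹ * ∑ i, (if ξ i then (1 : ℝ) else -1) * s i) '' S)) / 2 ^ n
/-- ReLU activation. -/
noncomputable def relu (x : ℝ) : ℝ := max x 0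

/-- Parameters of a bias-free ReLU network acting on the augmented input `x̃ = (x, 1)`,
with scalar output.  This parameterizes the class `SNN_{d,1}`. -/
structure SNNP (d : ℕ) where
  depth : ℕ
  width : ℕ → ℕ
  width_in : width 0 = d + 1
  width_out : width (depth + 1) = 1
  A : (ℓ : ℕ) → Matrix (Fin (width (ℓ + 1))) (Fin (width ℓ)) ℝ

namespace SNNP

variable {d : ℕ}

/-- Hidden layers: `h₀ = x̃` and `h_{ℓ+1} = σ(Ã_ℓ h_ℓ)`. -/
noncomputable def layer (φ : SNNP d) (x : Fin d → ℝ) : (ℓ : ℕ) → Fin (φ.width ℓ) → ℝ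
  | 0 => fun i => (Fin.snoc x 1 : Fin (d + 1) → ℝ) (Fin.cast φ.width_in i)
  | ℓ + 1 => fun i => relu ((φ.A ℓ).mulVec (layer φ x ℓ) i)

/-- Output of the network: `Ã_L h_L` (no ReLU on the output). -/
noncomputable def eval (φ : SNNP d) (x : Fin d → ℝ) : ℝ :=
  (φ.A φ.depth).mulVec (φ.layer x φ.depth) (Fin.cast φ.width_out.symm 0)

end SNNP

/-- Operator norm `‖A‖ = sup_{‖x‖_∞ ≤ 1} ‖Ax‖_∞`: the maximum ℓ¹-norm of the rows. -/
noncomputable def matOpNorm {m n : ℕ} (A : Matrix (Fin m) (Fin n) ℝ) : ℝ :=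
  ⨆ i, ∑ j, |A i j|

/-- The norm-constrained class `SNN_{d,1}(W, L, K)`: networks of the form
`φ(x) = Ã_L σ(Ã_{L-1} σ(⋯ σ(Ã_0 x̃)))` with max hidden width ≤ `W`, depth `L` and
`∏_{ℓ=0}^{L} ‖Ã_ℓ‖ ≤ K`. -/
noncomputable def SNNSet (d W L : ℕ) (K : ℝ) : Set ((Fin d → ℝ) → ℝ) :=
  {f | ∃ φ : SNNP d, φ.depth = L ∧ (∀ ℓ, 1 ≤ ℓ → ℓ ≤ L → φ.width ℓ ≤ W) ∧
      (∏ ℓ ∈ Finset.range (L + 1), matOpNorm (φ.A ℓ)) ≤ K ∧ f = φ.eval}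

open scoped Matrix

/-!
For each coordinate `j` and sign `b`, the width-one networks `x ↦ ±K σ(±x̃_j)` lie in
`SNN_{d,1}(W,L,K)`, so `S` contains `±K r` with `r_i = σ(±x̃_{i,j})`; choosing the sign for which
`σ` keeps the larger half gives `‖r‖₂² ≥ ½ ∑ᵢ x̃_{i,j}²`. A bounded set containing `±w` has
Rademacher complexity at least `E|∑ᵢ ξᵢ wᵢ| / n`, and Khintchine's inequality bounds this below by
`‖w‖₂ / (√3 n) ≥ ‖w‖₂ / (2n)`. The coordinate `j = d + 1`, where `x̃_{i,j} = 1`, gives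
`K / (2√(2n))`.
-/

def boolSign (b : Bool) : ℝ := if b then 1 else -1

def signedSum {n : ℕ} (ξ : Fin n → Bool) (w : Fin n → ℝ) : ℝ := ∑ i, boolSign (ξ i) * w i

lemma sum_signedSum_succ {n : ℕ} (F : ℝ → ℝ) (w : Fin (n + 1) → ℝ) :
    ∑ ξ : Fin (n + 1) → Bool, F (signedSum ξ w) =
      ∑ ξ : Fin n → Bool,
        (F (w 0 + signedSum ξ (Fin.tail w)) + F (-w 0 + signedSum ξ (Fin.tail w))) := by
  rw [← (Fin.consEquiv fun _ => Bool).sum_comp, Fintype.sum_prod_type, Fintype.sum_bool,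
    ← Finset.sum_add_distrib]
  simp [signedSum, Fin.sum_univ_succ, boolSign, Fin.tail]

lemma sum_const_boolVec {n : ℕ} (c : ℝ) : ∑ _ξ : Fin n → Bool, c = 2 ^ n * c := by
  simp

lemma sum_signedSum_sq {n : ℕ} (w : Fin n → ℝ) :
    ∑ ξ : Fin n → Bool, signedSum ξ w ^ 2 = 2 ^ n * ∑ i, w i ^ 2 := by
  induction n with
  | zero => simp [signedSum]
  | succ n ih =>
    have hpair : ∀ a y : ℝ, (a + y) ^ 2 + (-a + y) ^ 2 = 2 * a ^ 2 + 2 * y ^ 2 := by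
      intro a y; ring
    simp only [sum_signedSum_succ (· ^ 2), hpair, Finset.sum_add_distrib, ← Finset.mul_sum,
      sum_const_boolVec, ih, Fin.sum_univ_succ (fun i => w i ^ 2), Fin.tail]
    ring

lemma sum_signedSum_pow_four_le {n : ℕ} (w : Fin n → ℝ) :
    ∑ ξ : Fin n → Bool, signedSum ξ w ^ 4 ≤ 3 * 2 ^ n * (∑ i, w i ^ 2) ^ 2 := by
  induction n with
  | zero => simp [signedSum]
  | succ n ih =>
    have hpair : ∀ a y : ℝ,
        (a + y) ^ 4 + (-a + y) ^ 4 = 2 * a ^ 4 + 12 * a ^ 2 * y ^ 2 + 2 * y ^ 4 := by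
      intro a y; ring
    have htail := ih (Fin.tail w)
    simp only [sum_signedSum_succ (· ^ 4), hpair, Finset.sum_add_distrib, ← Finset.mul_sum,
      sum_const_boolVec, sum_signedSum_sq, Fin.sum_univ_succ (fun i => w i ^ 2)]
    simp only [Fin.tail] at htail ⊢
    rw [pow_succ (2 : ℝ) n]
    have h2n : (0 : ℝ) ≤ 2 ^ n := by positivity
    nlinarith [mul_nonneg h2n (pow_nonneg (sq_nonneg (w 0)) 2)]

lemma sum_sq_pow_three_le {ι : Type*} (s : Finset ι) (f : ι → ℝ) :
    (∑ i ∈ s, f i ^ 2) ^ 3 ≤ (∑ i ∈ s, |f i|) ^ 2 * ∑ i ∈ s, f i ^ 4 := by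
  set S := ∑ i ∈ s, f i ^ 2
  set A := ∑ i ∈ s, |f i|
  set T := ∑ i ∈ s, |f i| ^ 3
  set F := ∑ i ∈ s, f i ^ 4
  have hS : 0 ≤ S := Finset.sum_nonneg fun i _ => sq_nonneg _
  have hAT : S ^ 2 ≤ A * T := by
    have hsq : ∀ i, √|f i| ^ 2 = |f i| := fun i => Real.sq_sqrt (abs_nonneg _)
    calc S ^ 2 = (∑ i ∈ s, √|f i| * (|f i| * √|f i|)) ^ 2 := by
          congr 1; refine Finset.sum_congr rfl fun i _ => ?_
          rw [← sq_abs]; linear_combination (-|f i|) * hsq i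
      _ ≤ (∑ i ∈ s, √|f i| ^ 2) * ∑ i ∈ s, (|f i| * √|f i|) ^ 2 :=
          Finset.sum_mul_sq_le_sq_mul_sq _ _ _
      _ = A * T := by
          congr 1 <;> refine Finset.sum_congr rfl fun i _ => ?_
          · exact hsq i
          · linear_combination |f i| ^ 2 * hsq i
  have hTF : T ^ 2 ≤ S * F :=
    calc T ^ 2 = (∑ i ∈ s, |f i| * f i ^ 2) ^ 2 := by
          congr 1; refine Finset.sum_congr rfl fun i _ => ?_
          rw [← sq_abs (f i)]; ring
      _ ≤ (∑ i ∈ s, |f i| ^ 2) * ∑ i ∈ s, (f i ^ 2) ^ 2 := Finset.sum_mul_sq_le_sq_mul_sq _ _ _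
      _ = S * F := by simp only [sq_abs, ← pow_mul]; rfl
  have h4 : S * S ^ 3 ≤ S * (A ^ 2 * F) :=
    calc S * S ^ 3 = (S ^ 2) ^ 2 := by ring
      _ ≤ (A * T) ^ 2 := pow_le_pow_left₀ (sq_nonneg S) hAT 2
      _ = A ^ 2 * T ^ 2 := by ring
      _ ≤ A ^ 2 * (S * F) := mul_le_mul_of_nonneg_left hTF (sq_nonneg A)
      _ = S * (A ^ 2 * F) := by ring
  rcases hS.eq_or_lt with h0 | hpos
  · rw [← h0, zero_pow three_ne_zero]
    positivity
  · exact le_of_mul_le_mul_left h4 hpos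

-- Khintchine's inequality with constant `1/√3`, from `E X⁴ ≤ 3 (E X²)²` and `sum_sq_pow_three_le`.
lemma two_pow_mul_sqrt_sum_sq_le {n : ℕ} (w : Fin n → ℝ) :
    2 ^ n * √(∑ i, w i ^ 2) ≤ √3 * ∑ ξ : Fin n → Bool, |signedSum ξ w| := by
  set s := ∑ i, w i ^ 2
  set m := ∑ ξ : Fin n → Bool, |signedSum ξ w|
  have hs : 0 ≤ s := Finset.sum_nonneg fun i _ => sq_nonneg _
  have hm : 0 ≤ m := Finset.sum_nonneg fun ξ _ => abs_nonneg _
  have hQ : (0 : ℝ) < 2 ^ n := by positivity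
  have hmoment : (2 ^ n * s) ^ 3 ≤ m ^ 2 * (3 * 2 ^ n * s ^ 2) := by
    have h := sum_sq_pow_three_le Finset.univ fun ξ : Fin n → Bool => signedSum ξ w
    rw [sum_signedSum_sq] at h
    exact h.trans (mul_le_mul_of_nonneg_left (sum_signedSum_pow_four_le w) (sq_nonneg m))
  have hkey : (2 ^ n) ^ 2 * s ≤ 3 * m ^ 2 := by
    rcases hs.eq_or_lt with h0 | hpos
    · rw [← h0, mul_zero]; positivity
    · have hQs : 0 < 2 ^ n * s ^ 2 := by positivity
      nlinarith
  calc 2 ^ n * √s = √((2 ^ n) ^ 2 * s) := by rw [Real.sqrt_mul (sq_nonneg _), Real.sqrt_sq hQ.le]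
    _ ≤ √(3 * m ^ 2) := Real.sqrt_le_sqrt hkey
    _ = √3 * m := by rw [Real.sqrt_mul zero_le_three, Real.sqrt_sq hm]

lemma abs_boolSign_mul (b : Bool) (t : ℝ) : |boolSign b * t| = |t| := by
  cases b <;> simp [boolSign]

lemma signedSum_le {n : ℕ} (ξ : Fin n → Bool) (s : Fin n → ℝ) : signedSum ξ s ≤ n * ‖s‖ :=
  calc signedSum ξ s ≤ ∑ _i : Fin n, ‖s‖ := Finset.sum_le_sum fun i _ =>
        (le_abs_self _).trans ((abs_boolSign_mul _ _).trans_le (norm_le_pi_norm s i))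
    _ = n * ‖s‖ := by simp

lemma signedSum_neg {n : ℕ} (ξ : Fin n → Bool) (w : Fin n → ℝ) :
    signedSum ξ (-w) = -signedSum ξ w := by
  simp [signedSum]

lemma radComplexity_eq_sum_signedSum {n : ℕ} (S : Set (Fin n → ℝ)) :
    radComplexity S =
      (∑ ξ : Fin n → Bool, sSup ((fun s => (n : ℝ)⁻¹ * signedSum ξ s) '' S)) / 2 ^ n :=
  rfl

lemma bddAbove_signedSum_image {n : ℕ} {S : Set (Fin n → ℝ)} {M : ℝ} (hS : ∀ s ∈ S, ‖s‖ ≤ M)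
    (ξ : Fin n → Bool) : BddAbove ((fun s => (n : ℝ)⁻¹ * signedSum ξ s) '' S) := by
  refine ⟨(n : ℝ)⁻¹ * (n * M), ?_⟩
  rintro _ ⟨s, hs, rfl⟩
  exact mul_le_mul_of_nonneg_left ((signedSum_le ξ s).trans (by gcongr; exact hS s hs))
    (by positivity)

lemma sqrt_sum_sq_le_radComplexity {n : ℕ} {S : Set (Fin n → ℝ)} {M : ℝ}
    (hS : ∀ s ∈ S, ‖s‖ ≤ M) {w : Fin n → ℝ} (hw : w ∈ S) (hnegw : -w ∈ S) :
    (n : ℝ)⁻¹ * √(∑ i, w i ^ 2) / √3 ≤ radComplexity S := by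
  have hsup : ∀ ξ, (n : ℝ)⁻¹ * |signedSum ξ w| ≤
      sSup ((fun s => (n : ℝ)⁻¹ * signedSum ξ s) '' S) := by
    intro ξ
    rcases abs_choice (signedSum ξ w) with h | h <;> rw [h]
    · exact le_csSup (bddAbove_signedSum_image hS ξ) ⟨w, hw, rfl⟩
    · exact le_csSup (bddAbove_signedSum_image hS ξ) ⟨-w, hnegw, by simp only [signedSum_neg]⟩
  rw [radComplexity_eq_sum_signedSum, le_div_iff₀ (by positivity)]
  calc (n : ℝ)⁻¹ * √(∑ i, w i ^ 2) / √3 * 2 ^ n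
      = (n : ℝ)⁻¹ * (2 ^ n * √(∑ i, w i ^ 2)) / √3 := by ring
    _ ≤ (n : ℝ)⁻¹ * (√3 * ∑ ξ : Fin n → Bool, |signedSum ξ w|) / √3 := by
        gcongr ?_ / _
        exact mul_le_mul_of_nonneg_left (two_pow_mul_sqrt_sum_sq_le w) (by positivity)
    _ = ∑ ξ : Fin n → Bool, (n : ℝ)⁻¹ * |signedSum ξ w| := by
        rw [← Finset.mul_sum]; field_simp
    _ ≤ _ := Finset.sum_le_sum fun ξ _ => hsup ξ

lemma abs_relu_le (t : ℝ) : |relu t| ≤ |t| := by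
  rcases le_total t 0 with h | h <;> simp [relu, h, abs_nonneg]

lemma relu_relu (t : ℝ) : relu (relu t) = relu t :=
  max_eq_left (le_max_right t 0)

lemma relu_sq_add_relu_neg_sq (t : ℝ) : relu t ^ 2 + relu (-t) ^ 2 = t ^ 2 := by
  rcases le_total t 0 with h | h <;> simp [relu, h]

lemma exists_sum_sq_le_two_mul_sum_relu_sq {ι : Type*} (s : Finset ι) (v : ι → ℝ) :
    ∃ b : Bool, ∑ i ∈ s, v i ^ 2 ≤ 2 * ∑ i ∈ s, relu (boolSign b * v i) ^ 2 := by
  have hsplit : ∑ i ∈ s, v i ^ 2 =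
      ∑ i ∈ s, relu (boolSign true * v i) ^ 2 + ∑ i ∈ s, relu (boolSign false * v i) ^ 2 := by
    simp [boolSign, ← Finset.sum_add_distrib, relu_sq_add_relu_neg_sq]
  rcases le_total (∑ i ∈ s, relu (boolSign true * v i) ^ 2)
      (∑ i ∈ s, relu (boolSign false * v i) ^ 2) with h | h
  · exact ⟨false, by linarith⟩
  · exact ⟨true, by linarith⟩

lemma matOpNorm_nonneg {m k : ℕ} (A : Matrix (Fin m) (Fin k) ℝ) : 0 ≤ matOpNorm A :=
  Real.iSup_nonneg fun _ => Finset.sum_nonneg fun _ _ => abs_nonneg _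

lemma matOpNorm_of_fin_one {m : ℕ} (A : Matrix (Fin 1) (Fin m) ℝ) :
    matOpNorm A = ∑ k, |A 0 k| :=
  ciSup_unique

lemma abs_mulVec_le {m k : ℕ} (A : Matrix (Fin m) (Fin k) ℝ) (v : Fin k → ℝ) (i : Fin m) :
    |(A *ᵥ v) i| ≤ matOpNorm A * ‖v‖ :=
  calc |(A *ᵥ v) i| = |∑ j, A i j * v j| := rfl
    _ ≤ ∑ j, |A i j| * ‖v‖ := by
        refine (Finset.abs_sum_le_sum_abs (fun j => A i j * v j) _).trans
          (Finset.sum_le_sum fun j _ => ?_)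
        rw [abs_mul]
        exact mul_le_mul_of_nonneg_left (norm_le_pi_norm v j) (abs_nonneg _)
    _ ≤ matOpNorm A * ‖v‖ := by
        rw [← Finset.sum_mul]
        exact mul_le_mul_of_nonneg_right
          (le_ciSup (Set.finite_range fun i => ∑ j, |A i j|).bddAbove i) (norm_nonneg v)

namespace SNNP

variable {d : ℕ}

lemma norm_layer_le (φ : SNNP d) (x : Fin d → ℝ) (ℓ : ℕ) :
    ‖φ.layer x ℓ‖ ≤
      (∏ k ∈ Finset.range ℓ, matOpNorm (φ.A k)) * ‖(Fin.snoc x 1 : Fin (d + 1) → ℝ)‖ := by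
  have hP : ∀ ℓ, 0 ≤ (∏ k ∈ Finset.range ℓ, matOpNorm (φ.A k)) *
      ‖(Fin.snoc x 1 : Fin (d + 1) → ℝ)‖ := fun ℓ =>
    mul_nonneg (Finset.prod_nonneg fun k _ => matOpNorm_nonneg _) (norm_nonneg _)
  induction ℓ with
  | zero =>
    refine (pi_norm_le_iff_of_nonneg (hP 0)).2 fun i => ?_
    simpa [layer] using norm_le_pi_norm (Fin.snoc x 1 : Fin (d + 1) → ℝ) _
  | succ ℓ ih =>
    refine (pi_norm_le_iff_of_nonneg (hP (ℓ + 1))).2 fun i => ?_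
    calc |relu ((φ.A ℓ *ᵥ φ.layer x ℓ) i)| ≤ matOpNorm (φ.A ℓ) * ‖φ.layer x ℓ‖ :=
          (abs_relu_le _).trans (abs_mulVec_le _ _ _)
      _ ≤ _ := by
          rw [Finset.prod_range_succ, mul_comm _ (matOpNorm _), mul_assoc]
          exact mul_le_mul_of_nonneg_left ih (matOpNorm_nonneg _)

lemma abs_eval_le (φ : SNNP d) (x : Fin d → ℝ) :
    |φ.eval x| ≤
      (∏ k ∈ Finset.range (φ.depth + 1), matOpNorm (φ.A k)) *
        ‖(Fin.snoc x 1 : Fin (d + 1) → ℝ)‖ :=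
  calc |φ.eval x| ≤ matOpNorm (φ.A φ.depth) * ‖φ.layer x φ.depth‖ := abs_mulVec_le _ _ _
    _ ≤ _ := by
        rw [Finset.prod_range_succ, mul_comm _ (matOpNorm _), mul_assoc]
        exact mul_le_mul_of_nonneg_left (norm_layer_le φ x _) (matOpNorm_nonneg _)

noncomputable def ridge (d L : ℕ) (a : Fin (d + 1) → ℝ) (c : ℝ) : SNNP d where
  depth := L
  width ℓ := match ℓ with
    | 0 => d + 1
    | _ + 1 => 1
  width_in := rfl
  width_out := rfl
  A ℓ := match ℓ with
    | 0 => Matrix.of fun _ => a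
    | ℓ + 1 => Matrix.of fun _ _ => if ℓ + 1 = L then c else 1

variable {L : ℕ} {a : Fin (d + 1) → ℝ} {c : ℝ}

lemma ridge_layer_succ (x : Fin d → ℝ) {ℓ : ℕ} (hℓ : ℓ < L) (i : Fin 1) :
    (ridge d L a c).layer x (ℓ + 1) i = relu (a ⬝ᵥ Fin.snoc x 1) := by
  induction ℓ generalizing i with
  | zero => rfl
  | succ ℓ ih =>
    change relu (∑ k : Fin 1,
      (if ℓ + 1 = L then c else 1) * (ridge d L a c).layer x (ℓ + 1) k) = _
    rw [Fin.sum_univ_one, if_neg hℓ.ne, one_mul]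
    exact (congrArg relu (ih (by omega) 0)).trans (relu_relu _)

lemma ridge_eval (hL : 1 ≤ L) (x : Fin d → ℝ) :
    (ridge d L a c).eval x = c * relu (a ⬝ᵥ Fin.snoc x 1) := by
  obtain ⟨L, rfl⟩ := Nat.exists_eq_add_of_le' hL
  change ∑ k : Fin 1,
    (if L + 1 = L + 1 then c else 1) * (ridge d (L + 1) a c).layer x (L + 1) k = _
  rw [Fin.sum_univ_one, if_pos rfl, ridge_layer_succ x (Nat.lt_succ_self L)]

lemma ridge_prod_matOpNorm (hL : 1 ≤ L) :
    ∏ ℓ ∈ Finset.range (L + 1), matOpNorm ((ridge d L a c).A ℓ) = (∑ k, |a k|) * |c| := by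
  obtain ⟨L, rfl⟩ := Nat.exists_eq_add_of_le' hL
  have hsucc : ∀ ℓ ∈ Finset.range (L + 1),
      matOpNorm ((ridge d (L + 1) a c).A (ℓ + 1)) = if ℓ = L then |c| else 1 := by
    intro ℓ _
    change matOpNorm
      (Matrix.of fun (_ : Fin 1) (_ : Fin 1) => if ℓ + 1 = L + 1 then c else 1) = _
    rw [matOpNorm_of_fin_one, Fin.sum_univ_one]
    by_cases h : ℓ = L <;> simp [h]
  rw [Finset.prod_range_succ', Finset.prod_congr rfl hsucc, Finset.prod_ite_eq' _ L,
    if_pos (Finset.self_mem_range_succ L), mul_comm]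
  exact congrArg (· * |c|) (matOpNorm_of_fin_one _)

lemma ridge_eval_mem_SNNSet {W : ℕ} {K : ℝ} (hW : 1 ≤ W) (hL : 1 ≤ L)
    (hK : (∑ k, |a k|) * |c| ≤ K) : (ridge d L a c).eval ∈ SNNSet d W L K := by
  refine ⟨ridge d L a c, rfl, fun ℓ h1 _ => ?_, (ridge_prod_matOpNorm hL).trans_le hK, rfl⟩
  obtain ⟨ℓ, rfl⟩ := Nat.exists_eq_add_of_le' h1
  exact hW

end SNNP

lemma abs_le_of_mem_SNNSet {d W L : ℕ} {K : ℝ} {f : (Fin d → ℝ) → ℝ} (hf : f ∈ SNNSet d W L K)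
    (x : Fin d → ℝ) : |f x| ≤ K * ‖(Fin.snoc x 1 : Fin (d + 1) → ℝ)‖ := by
  obtain ⟨φ, rfl, -, hK, rfl⟩ := hf
  exact (φ.abs_eval_le x).trans (mul_le_mul_of_nonneg_right hK (norm_nonneg _))

lemma le_radComplexity_SNNSet {d n W L : ℕ} (hW : 1 ≤ W) (hL : 1 ≤ L) {K : ℝ} (hK : 0 ≤ K)
    (x : Fin n → Fin d → ℝ) (j : Fin (d + 1)) :
    K / (2 * √2 * n) * √(∑ i, (Fin.snoc (x i) 1 : Fin (d + 1) → ℝ) j ^ 2) ≤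
      radComplexity ((fun φ => fun i => φ (x i)) '' SNNSet d W L K) := by
  set xt : Fin n → Fin (d + 1) → ℝ := fun i => Fin.snoc (x i) 1
  set S := (fun φ => fun i => φ (x i)) '' SNNSet d W L K
  obtain ⟨b, hb⟩ := exists_sum_sq_le_two_mul_sum_relu_sq Finset.univ fun i => xt i j
  set r : Fin n → ℝ := fun i => relu (boolSign b * xt i j)
  have hS : ∀ s ∈ S, ‖s‖ ≤ K * ‖xt‖ := by
    rintro _ ⟨f, hf, rfl⟩
    refine (pi_norm_le_iff_of_nonneg (by positivity)).2 fun i => ?_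
    exact (abs_le_of_mem_SNNSet hf (x i)).trans
      (mul_le_mul_of_nonneg_left (norm_le_pi_norm xt i) hK)
  have hmem : ∀ c, |c| ≤ K → c • r ∈ S := by
    intro c hc
    refine ⟨_, SNNP.ridge_eval_mem_SNNSet (a := Pi.single j (boolSign b)) (c := c) hW hL ?_, ?_⟩
    · cases b <;> simpa [boolSign, Pi.single_apply, apply_ite] using hc
    · funext i
      simp [SNNP.ridge_eval hL, r, xt]
  have hR := sqrt_sum_sq_le_radComplexity hS (hmem K (abs_of_nonneg hK).le)
    (by simpa using hmem (-K) (by simp [abs_of_nonneg hK]))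
  have hKr : √(∑ i, (K • r) i ^ 2) = K * √(∑ i, r i ^ 2) := by
    simp only [Pi.smul_apply, smul_eq_mul, mul_pow, ← Finset.mul_sum]
    rw [Real.sqrt_mul (sq_nonneg K), Real.sqrt_sq hK]
  have hxt : √(∑ i, xt i j ^ 2) ≤ √2 * √(∑ i, r i ^ 2) := by
    rw [← Real.sqrt_mul zero_le_two]
    exact Real.sqrt_le_sqrt hb
  have h3 : √3 ≤ 2 := Real.sqrt_le_iff.2 ⟨zero_le_two, by norm_num⟩
  calc K / (2 * √2 * n) * √(∑ i, xt i j ^ 2)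
      ≤ K / (2 * √2 * n) * (√2 * √(∑ i, r i ^ 2)) := by gcongr
    _ = (n : ℝ)⁻¹ * (K * √(∑ i, r i ^ 2)) / 2 := by field_simp
    _ ≤ (n : ℝ)⁻¹ * (K * √(∑ i, r i ^ 2)) / √3 := by gcongr
    _ ≤ radComplexity S := by rwa [← hKr]

theorem statement3_general {d n : ℕ} (W L : ℕ) (hW : 2 ≤ W) (hL : 1 ≤ L)
    (K : ℝ) (hK : 0 ≤ K)
    (x : Fin n → Fin d → ℝ) :
    K / (2 * Real.sqrt (2 * n)) ≤
        K / (2 * Real.sqrt 2 * n) *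
          (⨆ j : Fin (d + 1), Real.sqrt (∑ i, ((Fin.snoc (x i) 1 : Fin (d + 1) → ℝ) j) ^ 2)) ∧
      K / (2 * Real.sqrt 2 * n) *
          (⨆ j : Fin (d + 1), Real.sqrt (∑ i, ((Fin.snoc (x i) 1 : Fin (d + 1) → ℝ) j) ^ 2)) ≤
        radComplexity ((fun φ => fun i => φ (x i)) '' SNNSet d W L K) := by
  have hc : 0 ≤ K / (2 * √2 * n) := by positivity
  constructor
  · have hlast : √(∑ i, (Fin.snoc (x i) 1 : Fin (d + 1) → ℝ) (Fin.last d) ^ 2) = √n := by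
      simp
    calc K / (2 * √(2 * n)) = K / (2 * √2) * (1 / √n) := by
          rw [Real.sqrt_mul zero_le_two]; ring
      _ = K / (2 * √2 * n) * √n := by rw [← Real.sqrt_div_self']; ring
      _ ≤ _ := by
          rw [← hlast]
          exact mul_le_mul_of_nonneg_left
            (le_ciSup (Set.finite_range fun j : Fin (d + 1) =>
              √(∑ i, (Fin.snoc (x i) 1 : Fin (d + 1) → ℝ) j ^ 2)).bddAbove (Fin.last d)) hc
  · rw [Real.mul_iSup_of_nonneg hc]
    exact ciSup_le fun j => le_radComplexity_SNNSet (by omega) hL hK x j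

/-- Rademacher complexity lower bound for `SNN_{d,1}(W,L,K)`.
For points `x₁, …, xₙ ∈ [-B,B]^d` and `S = {(φ(x₁),…,φ(xₙ)) : φ ∈ SNN_{d,1}(W,L,K)}`,
`R_n(S) ≥ (K/(2√2·n)) max_j √(∑ᵢ x̃_{i,j}²) ≥ K/(2√(2n))`, where `x̃ᵢ = (xᵢ, 1)`. -/
theorem statement3 {d n : ℕ} (hn : 1 ≤ n) (W L : ℕ) (hW : 2 ≤ W) (hL : 1 ≤ L)
    (K : ℝ) (hK : 0 ≤ K) (B : ℝ) (hB : 0 < B)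
    (x : Fin n → Fin d → ℝ) (hx : ∀ i j, x i j ∈ Set.Icc (-B) B) :
    K / (2 * Real.sqrt (2 * n)) ≤
        K / (2 * Real.sqrt 2 * n) *
          (⨆ j : Fin (d + 1), Real.sqrt (∑ i, ((Fin.snoc (x i) 1 : Fin (d + 1) → ℝ) j) ^ 2)) ∧
      K / (2 * Real.sqrt 2 * n) *
          (⨆ j : Fin (d + 1), Real.sqrt (∑ i, ((Fin.snoc (x i) 1 : Fin (d + 1) → ℝ) j) ^ 2)) ≤
        radComplexity ((fun φ => fun i => φ (x i)) '' SNNSet d W L K) :=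
  statement3_general W L hW hL K hK x
end

section
/- Let A := {−1,1}^m be the set of all sign vectors in ℝ^m. For any m ≥ 8, there exists a subset B ⊆ A with cardinality |B| ≥ 2^{m/8} such that any two distinct sign vectors a ≠ a′ in B differ in more than ⌊m/8⌋ coordinates. -/
/-!
Gilbert–Varshamov: a maximal binary code of minimum distance `d + 1` in `{0,1}^m` has the
balls of radius `d` around its words covering the whole cube, so it has at least
`2^m / ∑_{k ≤ d} (m choose k)` words. For `d = ⌊m/8⌋` the binomial tail is bounded by
`∑_{k ≤ d} (m choose k) ≤ 8^m / 7^(m-d)` (compare with `(1 + 7)^m`), which leaves at least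
`2^(m/8)` words; the sign vectors are the image of the cube under `true ↦ 1, false ↦ -1`.
-/

open Finset

section Hamming

variable {ι β : Type*} [Fintype ι] [DecidableEq ι] [Fintype β] [DecidableEq β]

lemma exists_hammingDist_separated_covering (d : ℕ) :
    ∃ B : Finset (ι → β), (∀ x ∈ B, ∀ y ∈ B, x ≠ y → d < hammingDist x y) ∧
      ∀ x, ∃ b ∈ B, hammingDist b x ≤ d := by
  let codes := (univ : Finset (ι → β)).powerset.filter fun B =>
    ∀ x ∈ B, ∀ y ∈ B, x ≠ y → d < hammingDist x y
  obtain ⟨B, hB, hmax⟩ := codes.exists_max_image card ⟨∅, by simp [codes]⟩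
  have hsep := (mem_filter.mp hB).2
  refine ⟨B, hsep, fun x => ?_⟩
  by_contra! hfar
  have hxB : x ∉ B := fun hx => by simpa using hfar x hx
  have hins : insert x B ∈ codes := by
    refine mem_filter.mpr ⟨mem_powerset.mpr (subset_univ _), ?_⟩
    simp only [mem_insert]
    rintro a (rfl | ha) b (rfl | hb) hab
    · exact absurd rfl hab
    · exact hammingDist_comm a b ▸ hfar b hb
    · exact hfar a ha
    · exact hsep a ha b hb hab
  have hle := hmax _ hins
  rw [card_insert_of_notMem hxB] at hle
  omega

lemma exists_hammingDist_separated_card_mul_le (d V : ℕ)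
    (hV : ∀ b : ι → β, #{x | hammingDist b x ≤ d} ≤ V) :
    ∃ B : Finset (ι → β), (∀ x ∈ B, ∀ y ∈ B, x ≠ y → d < hammingDist x y) ∧
      Fintype.card (ι → β) ≤ #B * V := by
  obtain ⟨B, hsep, hcov⟩ := exists_hammingDist_separated_covering (ι := ι) (β := β) d
  refine ⟨B, hsep, ?_⟩
  calc Fintype.card (ι → β)
      ≤ #(B.biUnion fun b => {x | hammingDist b x ≤ d}) := by
        rw [← card_univ]
        refine card_le_card fun x _ => ?_
        obtain ⟨b, hb, hbx⟩ := hcov x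
        exact mem_biUnion.mpr ⟨b, hb, by simpa using hbx⟩
    _ ≤ ∑ b ∈ B, #{x | hammingDist b x ≤ d} := card_biUnion_le
    _ ≤ #B * V := by simpa using sum_le_sum fun b _ => hV b

end Hamming

lemma card_hammingDist_le_le_sum_choose {ι : Type*} [Fintype ι] [DecidableEq ι] (d : ℕ)
    (b : ι → Bool) :
    #{x | hammingDist b x ≤ d} ≤ ∑ k ∈ range (d + 1), (Fintype.card ι).choose k := by
  -- a binary word is determined by the set of coordinates where it differs from `b`
  calc #{x | hammingDist b x ≤ d}
      ≤ #((range (d + 1)).biUnion fun k => powersetCard k (univ : Finset ι)) := by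
        refine card_le_card_of_injOn (fun x => ({i | b i ≠ x i} : Finset ι)) (fun x hx => ?_) ?_
        · rw [mem_coe, mem_filter] at hx
          rw [mem_coe, mem_biUnion]
          exact ⟨_, mem_range.mpr (Nat.lt_succ_of_le hx.2), mem_powersetCard_univ.mpr rfl⟩
        · intro x _ y _ hxy
          funext i
          have : b i ≠ x i ↔ b i ≠ y i := by simpa using Finset.ext_iff.mp hxy i
          revert this
          cases b i <;> cases x i <;> cases y i <;> simp
    _ ≤ ∑ k ∈ range (d + 1), #(powersetCard k (univ : Finset ι)) := card_biUnion_le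
    _ = ∑ k ∈ range (d + 1), (Fintype.card ι).choose k := by simp

lemma pow_sub_mul_sum_choose_le_succ_pow {a : ℕ} (ha : 0 < a) {m d : ℕ} (hd : d ≤ m) :
    a ^ (m - d) * ∑ k ∈ range (d + 1), m.choose k ≤ (a + 1) ^ m := by
  rw [add_comm a 1, add_pow, mul_sum]
  calc ∑ k ∈ range (d + 1), a ^ (m - d) * m.choose k
      ≤ ∑ k ∈ range (d + 1), 1 ^ k * a ^ (m - k) * m.choose k := by
        refine sum_le_sum fun k hk => ?_
        rw [one_pow, one_mul]
        have hk : k ≤ d := Nat.lt_succ_iff.mp (mem_range.mp hk)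
        exact Nat.mul_le_mul_right _ (Nat.pow_le_pow_right ha (by omega))
    _ ≤ ∑ k ∈ range (m + 1), 1 ^ k * a ^ (m - k) * m.choose k :=
        sum_le_sum_of_subset (range_subset_range.mpr (by omega))

lemma two_pow_le_pow_eight_of_mul_le {m d c : ℕ} (hd : 8 * d ≤ m)
    (h : 2 ^ m * 7 ^ (m - d) ≤ c * 8 ^ m) : 2 ^ m ≤ c ^ 8 := by
  -- `8 ^ 8 = 2 ^ 24`, and `7 ^ 7 ≥ 2 ^ 17` pays for the missing `2 ^ 17`
  have h7 : 2 ^ 17 ≤ 7 ^ 7 := by norm_num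
  refine le_of_mul_le_mul_right (a := (8 ^ m) ^ 8) ?_ (by positivity)
  have h8 : (8 : ℕ) ^ m = 2 ^ (3 * m) := by rw [pow_mul]; norm_num
  calc 2 ^ m * (8 ^ m) ^ 8 = 2 ^ (8 * m) * (2 ^ 17) ^ m := by
        rw [h8, ← pow_mul, ← pow_mul, ← pow_add, ← pow_add]; ring_nf
    _ ≤ 2 ^ (8 * m) * (7 ^ 7) ^ m := by gcongr
    _ ≤ 2 ^ (8 * m) * 7 ^ (8 * (m - d)) := by
        rw [← pow_mul]
        exact Nat.mul_le_mul_left _ (Nat.pow_le_pow_right (by norm_num) (by omega))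
    _ = (2 ^ m * 7 ^ (m - d)) ^ 8 := by ring
    _ ≤ (c * 8 ^ m) ^ 8 := by gcongr
    _ = c ^ 8 * (8 ^ m) ^ 8 := by ring

lemma two_rpow_div_eight_le {m c : ℕ} (h : 2 ^ m ≤ c ^ 8) : (2 : ℝ) ^ ((m : ℝ) / 8) ≤ c := by
  refine le_of_pow_le_pow_left₀ (n := 8) (by norm_num) (by positivity) ?_
  rw [← Real.rpow_natCast, ← Real.rpow_mul (by norm_num)]
  norm_num
  exact_mod_cast h

theorem statement12_general (m : ℕ) :
    ∃ B : Finset (Fin m → ℝ),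
      (∀ a ∈ B, ∀ i, a i = 1 ∨ a i = -1) ∧
      (2 : ℝ) ^ ((m : ℝ) / 8) ≤ (B.card : ℝ) ∧
      (∀ a ∈ B, ∀ a' ∈ B, a ≠ a' →
        m / 8 < (Finset.univ.filter fun i => a i ≠ a' i).card) := by
  obtain ⟨C, hsep, hcard⟩ := exists_hammingDist_separated_card_mul_le (ι := Fin m) (m / 8) _
    (card_hammingDist_le_le_sum_choose _)
  let sign : Bool → ℝ := fun t => if t then 1 else -1
  have hsign : Function.Injective sign := by
    intro s t; cases s <;> cases t <;> norm_num [sign]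
  refine ⟨C.image (sign ∘ ·), ?_, ?_, ?_⟩
  · simp only [mem_image]
    rintro _ ⟨c, -, rfl⟩ i
    show sign (c i) = 1 ∨ sign (c i) = -1
    cases c i <;> simp [sign]
  · rw [card_image_of_injective _ hsign.comp_left]
    refine two_rpow_div_eight_le (two_pow_le_pow_eight_of_mul_le (d := m / 8) (by omega) ?_)
    calc 2 ^ m * 7 ^ (m - m / 8)
        ≤ (#C * ∑ k ∈ range (m / 8 + 1), m.choose k) * 7 ^ (m - m / 8) :=
          Nat.mul_le_mul_right _ (by simpa using hcard)
      _ = #C * (7 ^ (m - m / 8) * ∑ k ∈ range (m / 8 + 1), m.choose k) := by ring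
      _ ≤ #C * 8 ^ m := Nat.mul_le_mul_left _
          (pow_sub_mul_sum_choose_le_succ_pow (a := 7) (by norm_num) (Nat.div_le_self m 8))
  · simp only [mem_image]
    rintro _ ⟨c, hc, rfl⟩ _ ⟨c', hc', rfl⟩ hne
    change m / 8 < hammingDist (fun i => sign (c i)) (fun i => sign (c' i))
    rw [hammingDist_comp (fun _ => sign) fun _ => hsign]
    exact hsep c hc c' hc' (by rintro rfl; exact hne rfl)

/-- combinatorial packing of sign vectors.  For `m ≥ 8` there is a set
`B` of sign vectors in `{−1,1}^m` with `|B| ≥ 2^{m/8}` such that any two distinct elements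
of `B` differ in more than `⌊m/8⌋` coordinates. -/
theorem statement12 (m : ℕ) (hm : 8 ≤ m) :
    ∃ B : Finset (Fin m → ℝ),
      (∀ a ∈ B, ∀ i, a i = 1 ∨ a i = -1) ∧
      (2 : ℝ) ^ ((m : ℝ) / 8) ≤ (B.card : ℝ) ∧
      (∀ a ∈ B, ∀ a' ∈ B, a ≠ a' →
        m / 8 < (Finset.univ.filter fun i => a i ≠ a' i).card) :=
  statement12_general m
end
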